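/- If the ball-basis is doubling, then for any locally integrable f and balls A ⊂ B, (1/μ(B))∫_B |f − f_A| ≤ C (1 + log(μ(B)/μ(A))) · ⟨f⟩*_{#,A}, where C is an admissible constant. -/

import Mathlib

open MeasureTheory

/-- A ball-basis on a measure space `(X, μ)` (Karagulyan). -/
structure BallBasis (X : Type*) [MeasurableSpace X] (μ : Measure X) where
  /-- the family of balls -/
  balls : Set (Set X)
  meas : ∀ B ∈ balls, MeasurableSet B
  /-- B1): positive measure -/
  pos : ∀ B ∈ balls, 0 < μ B
  /-- B1): finite measure -/
  fin : ∀ B ∈ balls, μ B < ⊤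
  /-- B2): any two points lie in a common ball -/
  two_points : ∀ x y : X, ∃ B ∈ balls, x ∈ B ∧ y ∈ B
  /-- B3): approximation of measurable sets by countable unions of balls -/
  approx : ∀ E : Set X, MeasurableSet E → ∀ ε : ENNReal, 0 < ε →
    ∃ Bs : ℕ → Set X, (∀ k, Bs k ∈ balls) ∧ μ (symmDiff E (⋃ k, Bs k)) < ε
  /-- the hull-ball `B*` -/
  hull : Set X → Set X
  hull_mem : ∀ B ∈ balls, hull B ∈ balls
  /-- B4): every ball `A` with `μ(A) ≤ 2μ(B)` intersecting `B` lies in `B*` -/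
  hull_sub : ∀ B ∈ balls, ∀ A ∈ balls, μ A ≤ 2 * μ B → (A ∩ B).Nonempty → A ⊆ hull B
  /-- the constant `K` -/
  K : NNReal
  /-- B4): `μ(B*) ≤ K μ(B)` -/
  hull_bound : ∀ B ∈ balls, μ (hull B) ≤ K * μ B

/-- A ball-basis is doubling if any ball `B` with `B* ≠ X` has an enlargement
`B'` with `2μ(B) ≤ μ(B') ≤ ημ(B)`. -/
def BallBasis.Doubling {X : Type*} [MeasurableSpace X] {μ : Measure X}
    (𝓑 : BallBasis X μ) (η : NNReal) : Prop :=
  2 < η ∧ ∀ B ∈ 𝓑.balls, 𝓑.hull B ≠ Set.univ →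
    ∃ B' ∈ 𝓑.balls, B ⊆ B' ∧ 2 * μ B ≤ μ B' ∧ μ B' ≤ η * μ B

/-- The average `f_B` of `f` on `B`. -/
noncomputable def ballAvg {X : Type*} [MeasurableSpace X] (μ : Measure X)
    (B : Set X) (f : X → ℝ) : ℝ :=
  (μ B).toReal⁻¹ * ∫ x in B, f x ∂μ

/-- The mean oscillation `⟨f⟩_{#,B}` of `f` on `B`. -/
noncomputable def sharpAvg {X : Type*} [MeasurableSpace X] (μ : Measure X)
    (B : Set X) (f : X → ℝ) : ℝ :=
  (μ B).toReal⁻¹ * ∫ x in B, |f x - ballAvg μ B f| ∂μ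

open ENNReal

namespace AvgOsc

variable {X : Type*} [MeasurableSpace X] {μ : Measure X}

lemma sharpAvg_nonneg (B : Set X) (f : X → ℝ) : 0 ≤ sharpAvg μ B f :=
  mul_nonneg (inv_nonneg.mpr ENNReal.toReal_nonneg)
    (integral_nonneg fun _ => abs_nonneg _)

lemma setIntegral_abs_sub_mono {D E : Set X} (hDE : D ⊆ E) (hEfin : μ E ≠ ⊤)
    (c : ℝ) (f : X → ℝ) (hf : IntegrableOn f E μ) :
    ∫ x in D, |f x - c| ∂μ ≤ ∫ x in E, |f x - c| ∂μ := by
  apply setIntegral_mono_set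
  · exact (hf.sub (integrableOn_const hEfin)).abs
  · exact Filter.Eventually.of_forall fun x => abs_nonneg _
  · exact HasSubset.Subset.eventuallyLE hDE

lemma avg_sub_eq {D : Set X} (hD0 : (μ D).toReal ≠ 0) (hDfin : μ D ≠ ⊤)
    (f : X → ℝ) (hf : IntegrableOn f D μ) (c : ℝ) :
    ballAvg μ D f - c = (μ D).toReal⁻¹ * ∫ x in D, (f x - c) ∂μ := by
  rw [integral_sub hf (integrableOn_const hDfin), setIntegral_const,
    smul_eq_mul, ballAvg]
  field_simp
  unfold Measure.real
  ring

lemma abs_avg_sub_avg_le {D E : Set X} (hDE : D ⊆ E) (hD0 : (μ D).toReal ≠ 0)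
    (hDfin : μ D ≠ ⊤) (hE0 : (μ E).toReal ≠ 0) (hEfin : μ E ≠ ⊤)
    (f : X → ℝ) (hf : IntegrableOn f E μ) :
    |ballAvg μ D f - ballAvg μ E f| ≤ (μ E).toReal / (μ D).toReal * sharpAvg μ E f := by
  set c := ballAvg μ E f with hc
  have hfD := hf.mono_set hDE
  rw [avg_sub_eq hD0 hDfin f hfD c, abs_mul, abs_inv,
    abs_of_nonneg ENNReal.toReal_nonneg]
  have h1 : |∫ x in D, (f x - c) ∂μ| ≤ ∫ x in D, |f x - c| ∂μ := by
    simpa [Real.norm_eq_abs] using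
      norm_integral_le_integral_norm (μ := μ.restrict D) (f := fun x => f x - c)
  have h2 := setIntegral_abs_sub_mono hDE hEfin c f hf
  calc (μ D).toReal⁻¹ * |∫ x in D, (f x - c) ∂μ|
      ≤ (μ D).toReal⁻¹ * ∫ x in E, |f x - c| ∂μ :=
        mul_le_mul_of_nonneg_left (h1.trans h2) (inv_nonneg.mpr ENNReal.toReal_nonneg)
    _ = (μ E).toReal / (μ D).toReal * sharpAvg μ E f := by
        rw [sharpAvg, ← hc]
        field_simp

end AvgOsc

/-- For a doubling ball-basis and balls `A ⊆ B`:
`(1/μ(B)) ∫_B |f - f_A| ≤ C (1 + log(μ(B)/μ(A))) ⟨f⟩*_{#,A}`, where the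
admissible constant `C` depends only on the basis data. -/
theorem avg_osc_log_bound {X : Type*} [MeasurableSpace X] (μ : Measure X)
    (𝓑 : BallBasis X μ) (η : NNReal) (hdb : 𝓑.Doubling η) :
    ∃ C : ℝ, 0 < C ∧
      ∀ f : X → ℝ, (∀ B ∈ 𝓑.balls, IntegrableOn f B μ) →
      ∀ A ∈ 𝓑.balls, ∀ B ∈ 𝓑.balls, A ⊆ B →
      ∀ N : ℝ, (∀ D ∈ 𝓑.balls, A ⊆ D → sharpAvg μ D f ≤ N) →
        (μ B).toReal⁻¹ * ∫ x in B, |f x - ballAvg μ A f| ∂μ ≤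
          C * (1 + Real.log ((μ B).toReal / (μ A).toReal)) * N := by
  obtain ⟨hη2, hdbl⟩ := hdb
  set Kr : ℝ := (𝓑.K : ℝ) with hKr
  set ηr : ℝ := (η : ℝ) with hηr
  have hKr0 : 0 ≤ Kr := NNReal.coe_nonneg _
  have hηr2 : 2 < ηr := by exact_mod_cast hη2
  have hηr0 : 0 ≤ ηr := by linarith
  have hlog2 : 0 < Real.log 2 := Real.log_pos one_lt_two
  refine ⟨Kr * ηr / 2 + Kr + ηr / Real.log 2 + 1, by positivity, ?_⟩
  intro f hf A hA B hB hAB N hN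
  have posR : ∀ D ∈ 𝓑.balls, 0 < (μ D).toReal := fun D hD =>
    ENNReal.toReal_pos (𝓑.pos D hD).ne' (𝓑.fin D hD).ne
  have hN0 : 0 ≤ N := (AvgOsc.sharpAvg_nonneg A f).trans (hN A hA subset_rfl)
  have hAne : A.Nonempty := nonempty_of_measure_ne_zero (𝓑.pos A hA).ne'
  have subset_hull : ∀ D ∈ 𝓑.balls, D ⊆ 𝓑.hull D := fun D hD =>
    𝓑.hull_sub D hD D hD (le_mul_of_one_le_left zero_le one_le_two)
      (by rw [Set.inter_self]; exact nonempty_of_measure_ne_zero (𝓑.pos D hD).ne')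
  -- the "hull step" used at the end of every chain
  have hullCase : ∀ D ∈ 𝓑.balls, A ⊆ D → 2 * μ D ≤ ↑η * μ B →
      𝓑.hull D ∈ 𝓑.balls ∧ A ⊆ 𝓑.hull D ∧ 2 * μ (𝓑.hull D) ≤ ↑𝓑.K * ↑η * μ B ∧
        |ballAvg μ (𝓑.hull D) f - ballAvg μ D f| ≤ Kr * N := by
    intro D hD hAD hinv
    have hCm := 𝓑.hull_mem D hD
    have hsub := subset_hull D hD
    refine ⟨hCm, hAD.trans hsub, ?_, ?_⟩
    · calc 2 * μ (𝓑.hull D) ≤ 2 * (↑𝓑.K * μ D) := mul_le_mul_right (𝓑.hull_bound D hD) 2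
        _ = ↑𝓑.K * (2 * μ D) := by ring
        _ ≤ ↑𝓑.K * (↑η * μ B) := mul_le_mul_right hinv _
        _ = ↑𝓑.K * ↑η * μ B := by rw [mul_assoc]
    · have h := AvgOsc.abs_avg_sub_avg_le hsub (posR D hD).ne' (𝓑.fin D hD).ne
        (posR _ hCm).ne' (𝓑.fin _ hCm).ne f (hf _ hCm)
      rw [abs_sub_comm]
      refine h.trans ?_
      have hratio : (μ (𝓑.hull D)).toReal / (μ D).toReal ≤ Kr := by
        rw [div_le_iff₀ (posR D hD)]
        calc (μ (𝓑.hull D)).toReal ≤ ((↑𝓑.K : ℝ≥0∞) * μ D).toReal :=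
            ENNReal.toReal_mono (ENNReal.mul_ne_top ENNReal.coe_ne_top (𝓑.fin D hD).ne)
              (𝓑.hull_bound D hD)
          _ = Kr * (μ D).toReal := by rw [ENNReal.toReal_mul, ENNReal.coe_toReal]
      exact mul_le_mul hratio (hN _ hCm (hAD.trans hsub)) (AvgOsc.sharpAvg_nonneg _ f) hKr0
  have key : ∀ n : ℕ, ∀ D ∈ 𝓑.balls, A ⊆ D → 2 * μ D ≤ ↑η * μ B →
      μ B ≤ 2 ^ (n + 1) * μ D →
      ∃ C ∈ 𝓑.balls, B ⊆ C ∧ A ⊆ C ∧ 2 * μ C ≤ ↑𝓑.K * ↑η * μ B ∧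
        |ballAvg μ C f - ballAvg μ D f| ≤ (Kr + n * ηr) * N := by
    intro n
    induction n with
    | zero =>
      intro D hD hAD hinv hle
      obtain ⟨hCm, hAC, hμC, hest⟩ := hullCase D hD hAD hinv
      obtain ⟨a, haA⟩ := hAne
      have hBC : B ⊆ 𝓑.hull D :=
        𝓑.hull_sub D hD B hB (by simpa using hle) ⟨a, hAB haA, hAD haA⟩
      exact ⟨𝓑.hull D, hCm, hBC, hAC, hμC, hest.trans (by simpa using le_refl (Kr * N))⟩
    | succ n ih =>
      intro D hD hAD hinv hle
      by_cases h2 : μ B ≤ 2 * μ D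
      · obtain ⟨hCm, hAC, hμC, hest⟩ := hullCase D hD hAD hinv
        obtain ⟨a, haA⟩ := hAne
        have hBC : B ⊆ 𝓑.hull D := 𝓑.hull_sub D hD B hB h2 ⟨a, hAB haA, hAD haA⟩
        refine ⟨𝓑.hull D, hCm, hBC, hAC, hμC, hest.trans ?_⟩
        have : (0:ℝ) ≤ (↑(n+1) : ℝ) * ηr * N := by positivity
        nlinarith
      · push_neg at h2
        by_cases hu : 𝓑.hull D = Set.univ
        · obtain ⟨hCm, hAC, hμC, hest⟩ := hullCase D hD hAD hinv
          refine ⟨𝓑.hull D, hCm, by rw [hu]; exact Set.subset_univ _, hAC, hμC, hest.trans ?_⟩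
          have : (0:ℝ) ≤ (↑(n+1) : ℝ) * ηr * N := by positivity
          nlinarith
        · obtain ⟨D', hD', hDD', hlow, hhigh⟩ := hdbl D hD hu
          have hAD' : A ⊆ D' := hAD.trans hDD'
          have hinv' : 2 * μ D' ≤ ↑η * μ B := by
            calc 2 * μ D' ≤ 2 * (↑η * μ D) := mul_le_mul_right hhigh 2
              _ = ↑η * (2 * μ D) := by ring
              _ ≤ ↑η * μ B := mul_le_mul_right h2.le _
          have hle' : μ B ≤ 2 ^ (n + 1) * μ D' := by
            calc μ B ≤ 2 ^ (n + 1 + 1) * μ D := hle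
              _ = 2 ^ (n + 1) * (2 * μ D) := by ring
              _ ≤ 2 ^ (n + 1) * μ D' := mul_le_mul_right hlow _
          obtain ⟨C, hC, hBC, hAC, hμC, hest⟩ := ih D' hD' hAD' hinv' hle'
          refine ⟨C, hC, hBC, hAC, hμC, ?_⟩
          have hstep : |ballAvg μ D' f - ballAvg μ D f| ≤ ηr * N := by
            have h := AvgOsc.abs_avg_sub_avg_le hDD' (posR D hD).ne' (𝓑.fin D hD).ne
              (posR D' hD').ne' (𝓑.fin D' hD').ne f (hf D' hD')
            rw [abs_sub_comm]
            refine h.trans ?_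
            have hratio : (μ D').toReal / (μ D).toReal ≤ ηr := by
              rw [div_le_iff₀ (posR D hD)]
              calc (μ D').toReal ≤ ((↑η : ℝ≥0∞) * μ D).toReal :=
                  ENNReal.toReal_mono (ENNReal.mul_ne_top ENNReal.coe_ne_top (𝓑.fin D hD).ne) hhigh
                _ = ηr * (μ D).toReal := by rw [ENNReal.toReal_mul, ENNReal.coe_toReal]
            exact mul_le_mul hratio (hN D' hD' hAD') (AvgOsc.sharpAvg_nonneg _ f) hηr0
          calc |ballAvg μ C f - ballAvg μ D f|
              ≤ |ballAvg μ C f - ballAvg μ D' f| + |ballAvg μ D' f - ballAvg μ D f| :=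
                abs_sub_le _ _ _
            _ ≤ (Kr + n * ηr) * N + ηr * N := add_le_add hest hstep
            _ = (Kr + (↑(n + 1) : ℝ) * ηr) * N := by push_cast; ring
  -- choose the number of doubling steps
  have hμA := posR A hA
  have hμB := posR B hB
  have hμAB : (μ A).toReal ≤ (μ B).toReal :=
    ENNReal.toReal_mono (𝓑.fin B hB).ne (measure_mono hAB)
  set L : ℝ := Real.log ((μ B).toReal / (μ A).toReal) with hL
  have hratio1 : (1:ℝ) ≤ (μ B).toReal / (μ A).toReal := (one_le_div hμA).2 hμAB
  have hL0 : 0 ≤ L := Real.log_nonneg hratio1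
  set n : ℕ := ⌊L / Real.log 2⌋₊ with hn
  have hnle : (n : ℝ) ≤ L / Real.log 2 := Nat.floor_le (by positivity)
  have hnlt : L / Real.log 2 < n + 1 := Nat.lt_floor_add_one _
  have hpow : μ B ≤ 2 ^ (n + 1) * μ A := by
    have hrlt : (μ B).toReal / (μ A).toReal < 2 ^ (n + 1) := by
      have h1 : L < ((n:ℝ) + 1) * Real.log 2 := by
        rw [div_lt_iff₀ hlog2] at hnlt; linarith
      calc (μ B).toReal / (μ A).toReal = Real.exp L := (Real.exp_log (by positivity)).symm
        _ < Real.exp (((n:ℝ) + 1) * Real.log 2) := Real.exp_lt_exp.2 h1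
        _ = 2 ^ (n + 1) := by
            rw [show ((n:ℝ) + 1) * Real.log 2 = Real.log (2 ^ (n + 1)) by
              rw [Real.log_pow]; push_cast; ring]
            exact Real.exp_log (by positivity)
    have hrle : (μ B).toReal ≤ 2 ^ (n + 1) * (μ A).toReal := by
      rw [div_lt_iff₀ hμA] at hrlt; linarith
    have hfin : (2 : ℝ≥0∞) ^ (n + 1) * μ A ≠ ⊤ :=
      ENNReal.mul_ne_top (by simp) (𝓑.fin A hA).ne
    rw [← ENNReal.toReal_le_toReal (𝓑.fin B hB).ne hfin]
    rw [ENNReal.toReal_mul, ENNReal.toReal_pow, ENNReal.toReal_ofNat]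
    exact hrle
  have hstart : 2 * μ A ≤ ↑η * μ B := by
    calc 2 * μ A ≤ 2 * μ B := mul_le_mul_right (measure_mono hAB) 2
      _ ≤ ↑η * μ B := by
          apply mul_le_mul_left
          exact_mod_cast hη2.le
  obtain ⟨C, hC, hBC, hAC, hμC, hest⟩ := key n A hA subset_rfl hstart hpow
  set c := ballAvg μ C f with hcdef
  have hμCpos := posR C hC
  have hfB := hf B hB
  have hintBc : IntegrableOn (fun x => |f x - c|) B μ :=
    (hfB.sub (integrableOn_const (𝓑.fin B hB).ne)).abs
  have hintBconst : IntegrableOn (fun _ => |c - ballAvg μ A f|) B μ :=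
    integrableOn_const (𝓑.fin B hB).ne
  have step1 : ∫ x in B, |f x - ballAvg μ A f| ∂μ ≤
      ∫ x in B, |f x - c| ∂μ + (μ B).toReal * |c - ballAvg μ A f| := by
    have hm : ∫ x in B, |f x - ballAvg μ A f| ∂μ ≤
        ∫ x in B, (|f x - c| + |c - ballAvg μ A f|) ∂μ := by
      apply integral_mono
      · exact (hfB.sub (integrableOn_const (𝓑.fin B hB).ne)).abs
      · exact hintBc.add hintBconst
      · exact fun x => abs_sub_le _ _ _
    rw [integral_add hintBc hintBconst, setIntegral_const, smul_eq_mul] at hm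
    exact hm
  have step2 : ∫ x in B, |f x - c| ∂μ ≤ (μ C).toReal * sharpAvg μ C f := by
    have h := AvgOsc.setIntegral_abs_sub_mono hBC (𝓑.fin C hC).ne c f (hf C hC)
    refine h.trans ?_
    rw [sharpAvg, ← hcdef, ← mul_assoc, mul_inv_cancel₀ hμCpos.ne', one_mul]
  have hratioC : (μ C).toReal / (μ B).toReal ≤ Kr * ηr / 2 := by
    rw [div_le_div_iff₀ hμB two_pos]
    have h := ENNReal.toReal_mono
      (ENNReal.mul_ne_top (ENNReal.mul_ne_top ENNReal.coe_ne_top ENNReal.coe_ne_top)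
        (𝓑.fin B hB).ne) hμC
    rw [ENNReal.toReal_mul, ENNReal.toReal_mul, ENNReal.toReal_mul, ENNReal.toReal_ofNat,
      ENNReal.coe_toReal, ENNReal.coe_toReal] at h
    linarith
  have habsCA : |c - ballAvg μ A f| ≤ (Kr + n * ηr) * N := by
    simpa [hcdef] using hest
  have hsharpC : sharpAvg μ C f ≤ N := hN C hC hAC
  have main : (μ B).toReal⁻¹ * ∫ x in B, |f x - ballAvg μ A f| ∂μ ≤
      Kr * ηr / 2 * N + (Kr + n * ηr) * N := by
    have h1 : (μ B).toReal⁻¹ * ∫ x in B, |f x - ballAvg μ A f| ∂μ ≤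
        (μ B).toReal⁻¹ * (∫ x in B, |f x - c| ∂μ + (μ B).toReal * |c - ballAvg μ A f|) :=
      mul_le_mul_of_nonneg_left step1 (inv_nonneg.mpr ENNReal.toReal_nonneg)
    have h2 : (μ B).toReal⁻¹ * (∫ x in B, |f x - c| ∂μ + (μ B).toReal * |c - ballAvg μ A f|)
        = (μ B).toReal⁻¹ * ∫ x in B, |f x - c| ∂μ + |c - ballAvg μ A f| := by
      field_simp
    have h3 : (μ B).toReal⁻¹ * ∫ x in B, |f x - c| ∂μ ≤ Kr * ηr / 2 * N := by
      have hh := mul_le_mul_of_nonneg_left step2 (inv_nonneg.mpr hμB.le)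
      refine hh.trans ?_
      have heq : (μ B).toReal⁻¹ * ((μ C).toReal * sharpAvg μ C f) =
          (μ C).toReal / (μ B).toReal * sharpAvg μ C f := by
        rw [div_eq_mul_inv]; ring
      rw [heq]
      exact mul_le_mul hratioC hsharpC (AvgOsc.sharpAvg_nonneg _ f) (by positivity)
    calc (μ B).toReal⁻¹ * ∫ x in B, |f x - ballAvg μ A f| ∂μ
        ≤ (μ B).toReal⁻¹ * ∫ x in B, |f x - c| ∂μ + |c - ballAvg μ A f| := by
          rw [← h2]; exact h1
      _ ≤ Kr * ηr / 2 * N + (Kr + n * ηr) * N := add_le_add h3 habsCA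
  refine main.trans ?_
  have hnlog : (n : ℝ) * Real.log 2 ≤ L := by
    rw [div_eq_mul_inv] at hnle
    calc (n:ℝ) * Real.log 2 ≤ L * (Real.log 2)⁻¹ * Real.log 2 := by
          exact mul_le_mul_of_nonneg_right hnle hlog2.le
      _ = L := by field_simp
  have hnη : (n : ℝ) * ηr ≤ ηr / Real.log 2 * L := by
    rw [div_mul_eq_mul_div, le_div_iff₀ hlog2]
    nlinarith
  have e2 : Kr * ηr / 2 + Kr + ↑n * ηr ≤
      (Kr * ηr / 2 + Kr + ηr / Real.log 2 + 1) * (1 + L) := by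
    nlinarith [hnη, hL0, hKr0, hηr0, mul_nonneg hKr0 hηr0,
      div_nonneg hηr0 hlog2.le, mul_nonneg (mul_nonneg hKr0 hηr0) hL0,
      mul_nonneg hKr0 hL0, mul_nonneg (div_nonneg hηr0 hlog2.le) hL0]
  calc Kr * ηr / 2 * N + (Kr + ↑n * ηr) * N
      = (Kr * ηr / 2 + Kr + ↑n * ηr) * N := by ring
    _ ≤ (Kr * ηr / 2 + Kr + ηr / Real.log 2 + 1) * (1 + L) * N :=
        mul_le_mul_of_nonneg_right e2 hN0
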